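/- Let n ≥ 3, let 1 ≤ a < b < n/2, let η = e^{2πi/n}, and let D ∈ ℂ[X] be the polynomial with (X−η^{a})(X−η^{−a})(X−η^{b})(X−η^{−b})·D(X) = ((η^{a}+η^{−a}−η^{b}−η^{−b})/n)·X(X²−1)(X^{n}−1). Then the number of roots of D in ℂ, counted with multiplicity, whose argument (taken in [0,2π)) lies in the open interval (0, 2πa/n) equals a − 1, and the number of roots of D, counted with multiplicity, whose argument lies in the open interval (0, 2πb/n) equals b − 2. Consequently, since a(D) + A(D) = n and 1 is a root of D of multiplicity 2, the perversity function values are π_{κ/d}(I₂(n)[a,b]) = 2a for κ/d = a/n and π_{κ/d}(I₂(n)[a,b]) = 2b − 1 for κ/d = b/n. -/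

import Mathlib

/-!
The polynomial `X (X² - 1) (Xⁿ - 1)` has the roots `0`, `-1` and the `n`-th roots of unity, all
simple except `1`, which is double. Since `η^{-k} = η^{n-k}`, the roots of `D` are these with
`η^a, η^{n-a}, η^b, η^{n-b}` removed; the constant is nonzero because `cos` is injective on
`[0, π]`. The root `η^k` (`k < n`) has argument `2πk/n`, so for `2m ≤ n` the roots of
`X (X² - 1) (Xⁿ - 1)` with argument in `(0, 2πm/n)` are `η, …, η^{m-1}`; of the removed ones only
`η^a` lies there, and only when `m = b`.
-/

open Polynomial

/-- The argument of a complex number taken in `[0, 2π)`. -/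
noncomputable def arg2pi (z : ℂ) : ℝ :=
  if 0 ≤ Complex.arg z then Complex.arg z else Complex.arg z + 2 * Real.pi

namespace Polynomial
variable {R : Type*} [CommRing R] [IsDomain R]

theorem X_mul_X_sq_sub_one_mul_X_pow_sub_one_ne_zero {n : ℕ} (hn : n ≠ 0) :
    (X * (X ^ 2 - 1) * (X ^ n - 1) : R[X]) ≠ 0 := by
  have h := X_pow_sub_C_ne_zero (R := R) (Nat.pos_of_ne_zero hn) 1
  have h2 := X_pow_sub_C_ne_zero (R := R) two_pos 1
  simp only [map_one] at h h2
  exact mul_ne_zero (mul_ne_zero X_ne_zero h2) h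

theorem roots_X_mul_X_sq_sub_one_mul_X_pow_sub_one {n : ℕ} (hn : n ≠ 0) :
    (X * (X ^ 2 - 1) * (X ^ n - 1) : R[X]).roots = 0 ::ₘ 1 ::ₘ -1 ::ₘ nthRoots n 1 := by
  have hsq : (X ^ 2 - 1 : R[X]) = (X - C 1) * (X - C (-1)) := by
    simp only [map_one, map_neg]; ring
  have hne := X_mul_X_sq_sub_one_mul_X_pow_sub_one_ne_zero (R := R) hn
  rw [roots_mul hne, roots_mul (left_ne_zero_of_mul hne), roots_X, hsq,
    roots_mul (hsq ▸ right_ne_zero_of_mul (left_ne_zero_of_mul hne)), roots_X_sub_C,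
    roots_X_sub_C, nthRoots, map_one]
  simp only [Multiset.singleton_add, Multiset.cons_add]

theorem cons_roots_eq_of_mul_eq {n : ℕ} (hn : n ≠ 0) {α β γ δ c : R} {D : R[X]} (hc : c ≠ 0)
    (hD : (X - C α) * (X - C β) * (X - C γ) * (X - C δ) * D =
      C c * (X * (X ^ 2 - 1) * (X ^ n - 1))) :
    α ::ₘ β ::ₘ γ ::ₘ δ ::ₘ D.roots = 0 ::ₘ 1 ::ₘ -1 ::ₘ nthRoots n 1 := by
  have hne : (X - C α) * (X - C β) * (X - C γ) * (X - C δ) * D ≠ 0 := by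
    rw [hD]; exact mul_ne_zero (C_ne_zero.2 hc) (X_mul_X_sq_sub_one_mul_X_pow_sub_one_ne_zero hn)
  have h3 := left_ne_zero_of_mul hne
  have h2 := left_ne_zero_of_mul h3
  rw [← roots_X_mul_X_sq_sub_one_mul_X_pow_sub_one hn,
    ← roots_C_mul (X * (X ^ 2 - 1) * (X ^ n - 1)) hc, ← hD, roots_mul hne, roots_mul h3,
    roots_mul h2, roots_mul (left_ne_zero_of_mul h2)]
  simp only [roots_X_sub_C, Multiset.singleton_add, Multiset.cons_add]

end Polynomial

open Complex
open scoped Real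

theorem arg2pi_exp_mul_I {θ : ℝ} (h0 : 0 ≤ θ) (h2 : θ < 2 * π) : arg2pi (exp (θ * I)) = θ := by
  rcases le_or_gt θ π with h | h
  · rw [arg2pi, exp_mul_I, arg_cos_add_sin_mul_I ⟨by linarith [Real.pi_pos], h⟩, if_pos h0]
  · have hshift : exp (θ * I) = exp (((θ - 2 * π : ℝ) : ℂ) * I) := by
      rw [← exp_periodic.sub_eq]; push_cast; ring_nf
    rw [arg2pi, hshift, exp_mul_I,
      arg_cos_add_sin_mul_I ⟨by linarith, by linarith [Real.pi_pos]⟩, if_neg (by linarith)]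
    ring

theorem arg2pi_zero : arg2pi 0 = 0 := by simp [arg2pi]

theorem arg2pi_one : arg2pi 1 = 0 := by simp [arg2pi]

theorem arg2pi_neg_one : arg2pi (-1) = π := by simp [arg2pi, Real.pi_nonneg]

theorem count_zero_roots_cons {n : ℕ} (hn : n ≠ 0) :
    (0 ::ₘ 1 ::ₘ -1 ::ₘ nthRoots n (1 : ℂ)).count 0 = 1 := by
  have h0 : (0 : ℂ) ∉ nthRoots n 1 := by simp [mem_nthRoots (Nat.pos_of_ne_zero hn), hn]
  simp [Multiset.count_eq_zero_of_notMem h0]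

theorem count_one_roots_cons {n : ℕ} (hn : n ≠ 0) :
    (0 ::ₘ 1 ::ₘ -1 ::ₘ nthRoots n (1 : ℂ)).count 1 = 2 := by
  have h1 : (nthRoots n (1 : ℂ)).count 1 = 1 :=
    Multiset.count_eq_one_of_mem (isPrimitiveRoot_exp n hn).nthRoots_one_nodup
      (by simp [mem_nthRoots (Nat.pos_of_ne_zero hn)])
  simp [h1, show (1 : ℂ) ≠ -1 by norm_num]

section RootsOfUnity

variable {n : ℕ} {η : ℂ}

theorem pow_eq_exp_mul_I (hη : η = exp (2 * π * I / n)) (k : ℕ) :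
    η ^ k = exp ((2 * π * k / n : ℝ) * I) := by
  rw [hη, ← exp_nat_mul]
  push_cast
  ring_nf

theorem arg2pi_pow (hη : η = exp (2 * π * I / n)) {k : ℕ} (hk : k < n) :
    arg2pi (η ^ k) = 2 * π * k / n := by
  have hn : (0 : ℝ) < n := by exact_mod_cast (k.zero_le.trans_lt hk)
  have hkn : (k : ℝ) < n := by exact_mod_cast hk
  rw [pow_eq_exp_mul_I hη]
  refine arg2pi_exp_mul_I (by positivity) ?_
  rw [div_lt_iff₀ hn]
  nlinarith [Real.pi_pos]

theorem pow_add_inv_pow_eq_two_cos (hη : η = exp (2 * π * I / n)) (k : ℕ) :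
    η ^ k + (η ^ k)⁻¹ = ((2 * Real.cos (2 * π * k / n) : ℝ) : ℂ) := by
  rw [pow_eq_exp_mul_I hη, ← exp_neg, ← neg_mul, ← two_cos]
  push_cast
  rfl

theorem pow_add_inv_pow_ne (hη : η = exp (2 * π * I / n)) {a b : ℕ} (hab : a < b)
    (hb : 2 * b ≤ n) : η ^ a + (η ^ a)⁻¹ ≠ η ^ b + (η ^ b)⁻¹ := by
  have hn : (0 : ℝ) < n := by exact_mod_cast (show 0 < n by omega)
  have hb' : (2 * b : ℝ) ≤ n := by exact_mod_cast hb
  have hab' : (a : ℝ) < b := by exact_mod_cast hab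
  rw [pow_add_inv_pow_eq_two_cos hη, pow_add_inv_pow_eq_two_cos hη, Ne, ofReal_inj]
  refine (mul_lt_mul_of_pos_left (Real.cos_lt_cos_of_nonneg_of_le_pi (by positivity) ?_ ?_)
    two_pos).ne'
  · rw [div_le_iff₀ hn]; nlinarith [Real.pi_pos]
  · gcongr

open Classical in
theorem card_filter_arg_map_pow (hη : η = exp (2 * π * I / n)) (S : Multiset ℕ)
    (hS : ∀ k ∈ S, k < n) (m : ℕ) :
    ((S.map (η ^ ·)).filter fun z => 0 < arg2pi z ∧ arg2pi z < 2 * π * m / n).card =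
      S.countP fun k => 0 < k ∧ k < m := by
  rw [Multiset.filter_map, Multiset.card_map, Multiset.countP_eq_card_filter]
  congr 1
  refine Multiset.filter_congr fun k hk => ?_
  have hn : (0 : ℝ) < n := by exact_mod_cast (k.zero_le.trans_lt (hS k hk))
  simp only [Function.comp_apply, arg2pi_pow hη (hS k hk)]
  rw [div_lt_div_iff_of_pos_right hn, mul_lt_mul_iff_right₀ (by positivity), Nat.cast_lt]
  simp [Real.pi_pos, hn]

open Classical in
theorem card_filter_arg_nthRoots_one (hη : η = exp (2 * π * I / n)) {m : ℕ} (hm : m ≤ n) :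
    ((nthRoots n (1 : ℂ)).filter fun z => 0 < arg2pi z ∧ arg2pi z < 2 * π * m / n).card =
      m - 1 := by
  rcases n.eq_zero_or_pos with rfl | hn
  · simp only [nthRoots_zero, Multiset.filter_zero, Multiset.card_zero]
    omega
  have hprim : IsPrimitiveRoot η n := hη ▸ isPrimitiveRoot_exp n hn.ne'
  rw [hprim.nthRoots_eq (one_pow n)]
  simp only [mul_one]
  rw [card_filter_arg_map_pow hη _ (fun k hk => Multiset.mem_range.1 hk),
    Multiset.countP_eq_card_filter, ← Finset.range_val, ← Finset.filter_val, Finset.card_val]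
  convert Nat.card_Ico 1 m using 2
  ext k
  simp only [Finset.mem_filter, Finset.mem_range, Finset.mem_Ico]
  omega

open Classical in
theorem card_filter_arg_roots_cons (hη : η = exp (2 * π * I / n)) {m : ℕ} (hm : 2 * m ≤ n) :
    ((0 ::ₘ 1 ::ₘ -1 ::ₘ nthRoots n (1 : ℂ)).filter
      fun z => 0 < arg2pi z ∧ arg2pi z < 2 * π * m / n).card = m - 1 := by
  have hmπ : 2 * π * m / n ≤ π := by
    rcases n.eq_zero_or_pos with rfl | hn
    · simp [Real.pi_nonneg]
    rw [div_le_iff₀ (by exact_mod_cast hn)]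
    have : (2 * m : ℝ) ≤ n := by exact_mod_cast hm
    nlinarith [Real.pi_pos]
  rw [Multiset.filter_cons_of_neg _ (by simp [arg2pi_zero]),
    Multiset.filter_cons_of_neg _ (by simp [arg2pi_one]),
    Multiset.filter_cons_of_neg _ (by simp [arg2pi_neg_one, hmπ]),
    card_filter_arg_nthRoots_one hη (by omega)]

theorem map_pow_add_roots_eq_of_mul_eq (hη : η = exp (2 * π * I / n)) {a b : ℕ} (hab : a < b)
    (hb : 2 * b < n) {D : ℂ[X]}
    (hD : (X - C (η ^ a)) * (X - C ((η ^ a)⁻¹)) * (X - C (η ^ b)) * (X - C ((η ^ b)⁻¹)) * D =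
      C ((η ^ a + (η ^ a)⁻¹ - η ^ b - (η ^ b)⁻¹) / (n : ℂ)) *
        (X * (X ^ 2 - 1) * (X ^ n - 1))) :
    ({a, n - a, b, n - b} : Multiset ℕ).map (η ^ ·) + D.roots =
      0 ::ₘ 1 ::ₘ -1 ::ₘ nthRoots n 1 := by
  have hprim : IsPrimitiveRoot η n := hη ▸ isPrimitiveRoot_exp n (by omega)
  have hinv : ∀ k ≤ n, (η ^ k)⁻¹ = η ^ (n - k) := fun k hk => by
    rw [pow_sub₀ _ (hprim.ne_zero (by omega)) hk, hprim.pow_eq_one, one_mul]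
  have hc : (η ^ a + (η ^ a)⁻¹ - η ^ b - (η ^ b)⁻¹) / (n : ℂ) ≠ 0 :=
    div_ne_zero (by rw [sub_sub]; exact sub_ne_zero.2 (pow_add_inv_pow_ne hη hab hb.le))
      (by exact_mod_cast (by omega : n ≠ 0))
  rw [← cons_roots_eq_of_mul_eq (by omega) hc hD, hinv a (by omega), hinv b (by omega)]
  simp

theorem rootMultiplicity_zero_of_map_pow_add_roots_eq (hη : η ≠ 0) (hn : n ≠ 0)
    {S : Multiset ℕ} {D : ℂ[X]}
    (hroots : S.map (η ^ ·) + D.roots = 0 ::ₘ 1 ::ₘ -1 ::ₘ nthRoots n 1) :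
    D.rootMultiplicity 0 = 1 := by
  simpa [hη, count_zero_roots_cons hn] using congrArg (Multiset.count 0) hroots

theorem rootMultiplicity_one_of_map_pow_add_roots_eq (hprim : IsPrimitiveRoot η n)
    (hn : n ≠ 0) {S : Multiset ℕ} (hS : ∀ k ∈ S, 0 < k ∧ k < n) {D : ℂ[X]}
    (hroots : S.map (η ^ ·) + D.roots = 0 ::ₘ 1 ::ₘ -1 ::ₘ nthRoots n 1) :
    D.rootMultiplicity 1 = 2 := by
  have h1 : (1 : ℂ) ∉ S.map (η ^ ·) := by
    simp only [Multiset.mem_map, not_exists, not_and]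
    exact fun k hk => hprim.pow_ne_one_of_pos_of_lt (hS k hk).1.ne' (hS k hk).2
  simpa [Multiset.count_eq_zero_of_notMem h1, count_one_roots_cons hn]
    using congrArg (Multiset.count 1) hroots

theorem natDegree_of_map_pow_add_roots_eq (hprim : IsPrimitiveRoot η n) {S : Multiset ℕ}
    {D : ℂ[X]} (hroots : S.map (η ^ ·) + D.roots = 0 ::ₘ 1 ::ₘ -1 ::ₘ nthRoots n 1) :
    D.natDegree + Multiset.card S = n + 3 := by
  have h := congrArg Multiset.card hroots
  simp only [Multiset.card_add, Multiset.card_map, Multiset.card_cons,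
    hprim.card_nthRoots_one] at h
  rw [← IsAlgClosed.card_roots_eq_natDegree]
  omega

open Classical in
theorem card_filter_arg_of_map_pow_add_roots_eq (hη : η = exp (2 * π * I / n))
    {S : Multiset ℕ} (hS : ∀ k ∈ S, k < n) {D : ℂ[X]}
    (hroots : S.map (η ^ ·) + D.roots = 0 ::ₘ 1 ::ₘ -1 ::ₘ nthRoots n 1) {m : ℕ}
    (hm : 2 * m ≤ n) :
    (D.roots.filter fun z => 0 < arg2pi z ∧ arg2pi z < 2 * π * m / n).card =
      m - 1 - S.countP fun k => 0 < k ∧ k < m := by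
  have h := congrArg
    (fun M => (M.filter fun z => 0 < arg2pi z ∧ arg2pi z < 2 * π * m / n).card) hroots
  simp only [Multiset.filter_add, Multiset.card_add, card_filter_arg_roots_cons hη hm,
    card_filter_arg_map_pow hη S hS] at h
  omega

end RootsOfUnity

open Classical in
theorem I2ab_perversity_general (n : ℕ) (a b : ℕ) (ha : 1 ≤ a) (hab : a < b)
    (hb : 2 * b < n) (η : ℂ) (hη : η = Complex.exp (2 * Real.pi * Complex.I / (n : ℂ)))
    (D : ℂ[X])
    (hD : (X - C (η ^ a)) * (X - C ((η ^ a)⁻¹)) * (X - C (η ^ b)) * (X - C ((η ^ b)⁻¹)) * D =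
      C ((η ^ a + (η ^ a)⁻¹ - η ^ b - (η ^ b)⁻¹) / (n : ℂ)) *
        (X * (X ^ 2 - 1) * (X ^ n - 1))) :
    (D.roots.filter
        (fun z => 0 < arg2pi z ∧ arg2pi z < 2 * Real.pi * (a : ℝ) / (n : ℝ))).card = a - 1 ∧
    (D.roots.filter
        (fun z => 0 < arg2pi z ∧ arg2pi z < 2 * Real.pi * (b : ℝ) / (n : ℝ))).card = b - 2 ∧
    D.rootMultiplicity 0 + D.natDegree = n ∧ D.rootMultiplicity 1 = 2 ∧
    ((a : ℝ) / (n : ℝ)) * ((D.rootMultiplicity 0 : ℝ) + (D.natDegree : ℝ)) +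
        ((D.roots.filter
          (fun z => 0 < arg2pi z ∧ arg2pi z < 2 * Real.pi * (a : ℝ) / (n : ℝ))).card : ℝ) +
        (D.rootMultiplicity 1 : ℝ) / 2 = 2 * (a : ℝ) ∧
    ((b : ℝ) / (n : ℝ)) * ((D.rootMultiplicity 0 : ℝ) + (D.natDegree : ℝ)) +
        ((D.roots.filter
          (fun z => 0 < arg2pi z ∧ arg2pi z < 2 * Real.pi * (b : ℝ) / (n : ℝ))).card : ℝ) +
        (D.rootMultiplicity 1 : ℝ) / 2 = 2 * (b : ℝ) - 1 := by
  have hn : n ≠ 0 := by omega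
  have hprim : IsPrimitiveRoot η n := hη ▸ isPrimitiveRoot_exp n hn
  have hroots := map_pow_add_roots_eq_of_mul_eq hη hab hb hD
  have hS : ∀ k ∈ ({a, n - a, b, n - b} : Multiset ℕ), 0 < k ∧ k < n := by
    simp only [Multiset.insert_eq_cons, Multiset.mem_cons, Multiset.mem_singleton,
      forall_eq_or_imp, forall_eq]
    omega
  have hm0 := rootMultiplicity_zero_of_map_pow_add_roots_eq (hprim.ne_zero hn) hn hroots
  have hm1 := rootMultiplicity_one_of_map_pow_add_roots_eq hprim hn hS hroots
  have hsum : D.rootMultiplicity 0 + D.natDegree = n := by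
    have hdeg := natDegree_of_map_pow_add_roots_eq hprim hroots
    simp only [Multiset.insert_eq_cons, Multiset.card_cons, Multiset.card_singleton] at hdeg
    omega
  have hcount (m : ℕ) (hm : m ≤ b) := card_filter_arg_of_map_pow_add_roots_eq hη
    (fun k hk => (hS k hk).2) hroots (m := m) (by omega)
  simp only [Multiset.insert_eq_cons, ← Multiset.cons_zero, Multiset.countP_cons,
    Multiset.countP_zero] at hcount
  have hca :
      (D.roots.filter fun z => 0 < arg2pi z ∧ arg2pi z < 2 * π * a / n).card = a - 1 := by
    rw [hcount a hab.le]; split_ifs <;> omega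
  have hcb :
      (D.roots.filter fun z => 0 < arg2pi z ∧ arg2pi z < 2 * π * b / n).card = b - 2 := by
    rw [hcount b le_rfl]; split_ifs <;> omega
  refine ⟨hca, hcb, hsum, hm1, ?_, ?_⟩
  · rw [← Nat.cast_add, hsum, hca, hm1, Nat.cast_sub ha]
    field_simp
    ring
  · rw [← Nat.cast_add, hsum, hcb, hm1, Nat.cast_sub (by omega : 2 ≤ b)]
    field_simp
    ring

open Classical in
/-- For `n ≥ 3`, `1 ≤ a < b < n/2`, `η = e^{2πi/n}`, and `D` the generic degree of
`I₂(n)[a,b]`: the number of roots of `D` (with multiplicity) with argument in `(0, 2πa/n)` is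
`a − 1`, the number with argument in `(0, 2πb/n)` is `b − 2`; consequently, since
`a(D) + A(D) = n` and `1` is a root of `D` of multiplicity `2`, the perversity values are
`π_{a/n}(I₂(n)[a,b]) = 2a` and `π_{b/n}(I₂(n)[a,b]) = 2b − 1`. -/
theorem I2ab_perversity (n : ℕ) (hn : 3 ≤ n) (a b : ℕ) (ha : 1 ≤ a) (hab : a < b)
    (hb : 2 * b < n) (η : ℂ) (hη : η = Complex.exp (2 * Real.pi * Complex.I / (n : ℂ)))
    (D : ℂ[X])
    (hD : (X - C (η ^ a)) * (X - C ((η ^ a)⁻¹)) * (X - C (η ^ b)) * (X - C ((η ^ b)⁻¹)) * D =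
      C ((η ^ a + (η ^ a)⁻¹ - η ^ b - (η ^ b)⁻¹) / (n : ℂ)) *
        (X * (X ^ 2 - 1) * (X ^ n - 1))) :
    (D.roots.filter
        (fun z => 0 < arg2pi z ∧ arg2pi z < 2 * Real.pi * (a : ℝ) / (n : ℝ))).card = a - 1 ∧
    (D.roots.filter
        (fun z => 0 < arg2pi z ∧ arg2pi z < 2 * Real.pi * (b : ℝ) / (n : ℝ))).card = b - 2 ∧
    D.rootMultiplicity 0 + D.natDegree = n ∧ D.rootMultiplicity 1 = 2 ∧
    ((a : ℝ) / (n : ℝ)) * ((D.rootMultiplicity 0 : ℝ) + (D.natDegree : ℝ)) +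
        ((D.roots.filter
          (fun z => 0 < arg2pi z ∧ arg2pi z < 2 * Real.pi * (a : ℝ) / (n : ℝ))).card : ℝ) +
        (D.rootMultiplicity 1 : ℝ) / 2 = 2 * (a : ℝ) ∧
    ((b : ℝ) / (n : ℝ)) * ((D.rootMultiplicity 0 : ℝ) + (D.natDegree : ℝ)) +
        ((D.roots.filter
          (fun z => 0 < arg2pi z ∧ arg2pi z < 2 * Real.pi * (b : ℝ) / (n : ℝ))).card : ℝ) +
        (D.rootMultiplicity 1 : ℝ) / 2 = 2 * (b : ℝ) - 1 :=
  I2ab_perversity_general n a b ha hab hb η hη D hD
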